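/- arXiv:math/0701288 — 3 statements merged into one kernel-verified Lean document; each statement's English description precedes it below -/
import Mathlib

section
/- The number of binary strings of length n containing exactly m ones and exactly k maximal runs of ones equals C(m−1, k−1)·C(n−m+1, k), for n ≥ 1, 1 ≤ m ≤ n, and k ≥ 1. -/
/-- Number of maximal runs of 1's in the (1-indexed) sequence `f 1, …, f n`:
each maximal run is counted via its starting position. -/
def numRuns (n : ℕ) (f : ℕ → ℕ) : ℕ :=
  ((Finset.Icc 1 n).filter (fun k => f k = 1 ∧ (k = 1 ∨ f (k - 1) = 0))).card

open Finset


def runStarts (n : ℕ) (prev : Bool) (g : Fin n → Bool) : Finset (Fin n) :=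
  Finset.univ.filter (fun i => g i = true ∧
    (if (i : ℕ) = 0 then prev
     else g ⟨(i : ℕ) - 1, lt_of_le_of_lt (Nat.sub_le _ _) i.2⟩) = false)

def cnt (n m k : ℕ) (prev : Bool) : ℕ :=
  (Finset.univ.filter (fun g : Fin n → Bool =>
    (∑ i, (if g i then 1 else 0)) = m ∧ (runStarts n prev g).card = k)).card

-- split lemma
lemma card_filter_succ {n : ℕ} (P : (Fin (n+1) → Bool) → Prop) [DecidablePred P] :
    (Finset.univ.filter P).card =
      (Finset.univ.filter fun c : Fin n → Bool => P (Fin.cons true c)).card +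
      (Finset.univ.filter fun c : Fin n → Bool => P (Fin.cons false c)).card := by
  classical
  have h : (Finset.univ.filter P) =
      ((Finset.univ.filter fun c : Fin n → Bool => P (Fin.cons true c)).image (Fin.cons true)) ∪
      ((Finset.univ.filter fun c : Fin n → Bool => P (Fin.cons false c)).image (Fin.cons false)) := by
    ext g
    simp only [mem_filter, mem_univ, true_and, mem_union, mem_image]
    constructor
    · intro hP
      cases hb : g 0 with
      | false =>
        right; exact ⟨Fin.tail g, by rw [← hb, Fin.cons_self_tail]; exact hP, by rw [← hb, Fin.cons_self_tail]⟩
      | true =>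
        left; exact ⟨Fin.tail g, by rw [← hb, Fin.cons_self_tail]; exact hP, by rw [← hb, Fin.cons_self_tail]⟩
    · rintro (⟨c, hc, rfl⟩ | ⟨c, hc, rfl⟩) <;> exact hc
  rw [h, Finset.card_union_of_disjoint, Finset.card_image_of_injective _ (Fin.cons_right_injective _),
    Finset.card_image_of_injective _ (Fin.cons_right_injective _)]
  rw [Finset.disjoint_left]
  rintro g hg1 hg2
  simp only [mem_image] at hg1 hg2
  obtain ⟨c1, _, rfl⟩ := hg1
  obtain ⟨c2, _, h2⟩ := hg2
  have := congrArg (fun f => f 0) h2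
  simp at this

lemma runStarts_cons (n : ℕ) (prev b : Bool) (c : Fin n → Bool) :
    (runStarts (n+1) prev (Fin.cons b c)).card =
      (if b = true ∧ prev = false then 1 else 0) + (runStarts n b c).card := by
  unfold runStarts
  rw [Finset.card_filter, Finset.card_filter, Fin.sum_univ_succ]
  simp [Fin.cons_zero]
  congr 1
  apply Finset.filter_congr
  intro x _
  obtain ⟨v, hv⟩ := x
  cases v with
  | zero =>
    have : (⟨(0:ℕ), by omega⟩ : Fin (n+1)) = 0 := rfl
    simp [this]
  | succ j =>
    have h1 : (⟨(j+1:ℕ), by omega⟩ : Fin (n+1)) = Fin.succ ⟨j, by omega⟩ := rfl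
    simp only [h1, Fin.cons_succ]
    simp

lemma ones_cons (n : ℕ) (b : Bool) (c : Fin n → Bool) :
    (∑ i : Fin (n+1), (if (Fin.cons b c : Fin (n+1) → Bool) i = true then 1 else 0)) =
      (if b = true then 1 else 0) + ∑ i : Fin n, (if c i = true then 1 else 0) := by
  rw [Fin.sum_univ_succ]
  simp [Fin.cons_succ]

lemma cnt_succ_true (n m k : ℕ) (hm : 1 ≤ m) :
    cnt (n+1) m k true = cnt n (m-1) k true + cnt n m k false := by
  unfold cnt
  rw [card_filter_succ]
  congr 1
  · apply congrArg
    apply Finset.filter_congr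
    intro c _
    rw [ones_cons, runStarts_cons]
    simp only [if_true]
    norm_num
    omega
  · apply congrArg
    apply Finset.filter_congr
    intro c _
    rw [ones_cons, runStarts_cons]
    norm_num

lemma cnt_succ_false (n m k : ℕ) (hm : 1 ≤ m) (hk : 1 ≤ k) :
    cnt (n+1) m k false = cnt n (m-1) (k-1) true + cnt n m k false := by
  unfold cnt
  rw [card_filter_succ]
  congr 1
  · apply congrArg
    apply Finset.filter_congr
    intro c _
    rw [ones_cons, runStarts_cons]
    norm_num
    omega
  · apply congrArg
    apply Finset.filter_congr
    intro c _
    rw [ones_cons, runStarts_cons]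
    norm_num

lemma cnt_eq_zero_of_gt (n m k : ℕ) (prev : Bool) (h : n < m) : cnt n m k prev = 0 := by
  unfold cnt
  rw [Finset.card_eq_zero, Finset.eq_empty_iff_forall_notMem]
  intro g hg
  rw [Finset.mem_filter] at hg
  obtain ⟨-, h1, -⟩ := hg
  have hle : (∑ i : Fin n, (if g i then 1 else 0)) ≤ ∑ _i : Fin n, 1 := by
    apply Finset.sum_le_sum
    intro i _
    split <;> omega
  have hn : (∑ _i : Fin n, (1:ℕ)) = n := by simp
  omega

lemma cnt_zero_runs (n m : ℕ) (hm : 1 ≤ m) : cnt n m 0 false = 0 := by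
  unfold cnt
  rw [Finset.card_eq_zero, Finset.eq_empty_iff_forall_notMem]
  intro g hg
  rw [Finset.mem_filter] at hg
  obtain ⟨_, hones, hruns⟩ := hg
  have hex : ∃ i, g i = true := by
    by_contra hno
    push_neg at hno
    have : (∑ i : Fin n, (if g i then 1 else 0)) = 0 := by
      apply Finset.sum_eq_zero
      intro i _
      simp [hno i]
    omega
  obtain ⟨i0, hi0⟩ := hex
  set S := Finset.univ.filter (fun i => g i = true) with hS
  have hSne : S.Nonempty := ⟨i0, by simp [hS, hi0]⟩
  set j := S.min' hSne with hj
  have hjS : j ∈ S := Finset.min'_mem _ _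
  have hgj : g j = true := by simpa [hS] using hjS
  have hjmem : j ∈ runStarts n false g := by
    rw [runStarts, Finset.mem_filter]
    refine ⟨Finset.mem_univ _, hgj, ?_⟩
    split
    · rfl
    · rename_i hne
      by_contra hcon
      simp only [Bool.not_eq_false] at hcon
      have hmem : (⟨(j:ℕ)-1, lt_of_le_of_lt (Nat.sub_le _ _) j.2⟩ : Fin n) ∈ S := by
        simp [hS, hcon]
      have := Finset.min'_le _ _ hmem
      rw [← hj] at this
      have hlt : (j:ℕ) - 1 < (j:ℕ) := by omega
      rw [Fin.le_def] at this
      simp at this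
      omega
  have : (runStarts n false g).Nonempty := ⟨j, hjmem⟩
  rw [Finset.card_eq_zero] at hruns
  rw [hruns] at this
  exact Finset.not_nonempty_empty this

lemma cnt_m_zero (n k : ℕ) (prev : Bool) : cnt n 0 k prev = if k = 0 then 1 else 0 := by
  unfold cnt
  have hzero : ∀ g : Fin n → Bool, (∑ i : Fin n, (if g i then 1 else 0)) = 0 ↔ g = fun _ => false := by
    intro g
    constructor
    · intro h
      funext i
      by_contra hi
      simp only [Bool.not_eq_false] at hi
      have := Finset.sum_eq_zero_iff.mp h i (Finset.mem_univ i)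
      simp [hi] at this
    · intro h
      subst h
      simp
  have hstarts : (runStarts n prev (fun _ => false)) = ∅ := by
    rw [runStarts, Finset.eq_empty_iff_forall_notMem]
    intro i hi
    simp at hi
  split_ifs with hk
  · subst hk
    rw [Finset.card_eq_one]
    refine ⟨fun _ => false, ?_⟩
    ext g
    simp only [Finset.mem_filter, Finset.mem_univ, true_and, Finset.mem_singleton]
    constructor
    · rintro ⟨h1, _⟩
      exact (hzero g).mp h1
    · rintro rfl
      exact ⟨(hzero _).mpr rfl, by rw [hstarts]; simp⟩
  · rw [Finset.card_eq_zero, Finset.eq_empty_iff_forall_notMem]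
    intro g hg
    rw [Finset.mem_filter] at hg
    obtain ⟨_, h1, h2⟩ := hg
    rw [(hzero g).mp h1] at h2
    rw [hstarts] at h2
    simp at h2
    exact hk h2.symm

lemma choose_zero_eq (k : ℕ) : Nat.choose 0 k = if k = 0 then 1 else 0 := by
  cases k with
  | zero => rfl
  | succ k => simp [Nat.choose_zero_succ]

lemma main_count : ∀ n m k : ℕ,
    (1 ≤ m → m ≤ n → 1 ≤ k →
      cnt n m k false = Nat.choose (m-1) (k-1) * Nat.choose (n-m+1) k) ∧
    (m ≤ n → cnt n m k true = Nat.choose m k * Nat.choose (n-m) k) := by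
  intro n
  induction n with
  | zero =>
    intro m k
    constructor
    · intro h1 h2 _
      omega
    · intro hm
      interval_cases m
      rw [cnt_m_zero, choose_zero_eq]
      cases k <;> simp
  | succ n ih =>
    intro m k
    constructor
    · intro hm1 hm2 hk
      obtain ⟨m', rfl⟩ : ∃ m', m = m' + 1 := ⟨m - 1, by omega⟩
      obtain ⟨k', rfl⟩ : ∃ k', k = k' + 1 := ⟨k - 1, by omega⟩
      rw [cnt_succ_false n _ _ (by omega) (by omega)]
      simp only [Nat.add_sub_cancel]
      rw [(ih m' k').2 (by omega)]
      rcases Nat.lt_or_ge n (m' + 1) with h | h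
      · -- m = n + 1
        rw [cnt_eq_zero_of_gt n (m'+1) (k'+1) false (by omega)]
        have e1 : n - m' = 0 := by omega
        have e2 : n + 1 - (m'+1) + 1 = 1 := by omega
        rw [e1, e2, add_zero]
        congr 1
      · rw [(ih (m'+1) (k'+1)).1 (by omega) h (by omega)]
        simp only [Nat.add_sub_cancel]
        have e1 : n - (m'+1) + 1 = n - m' := by omega
        have e2 : n + 1 - (m'+1) + 1 = (n - m') + 1 := by omega
        rw [e1, e2, Nat.choose_succ_succ]
        ring
    · intro hmn
      cases m with
      | zero =>
        rw [cnt_m_zero, choose_zero_eq]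
        cases k <;> simp
      | succ m' =>
        rw [cnt_succ_true n _ _ (by omega)]
        simp only [Nat.add_sub_cancel]
        rw [(ih m' k).2 (by omega)]
        cases k with
        | zero =>
          rw [cnt_zero_runs n (m'+1) (by omega)]
          simp [Nat.choose_zero_right]
        | succ k' =>
          rcases Nat.lt_or_ge n (m' + 1) with h | h
          · rw [cnt_eq_zero_of_gt n (m'+1) (k'+1) false (by omega)]
            have e1 : n - m' = 0 := by omega
            have e2 : n + 1 - (m'+1) = 0 := by omega
            rw [e1, e2]
            simp [Nat.choose_zero_succ]
          · rw [(ih (m'+1) (k'+1)).1 (by omega) h (by omega)]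
            simp only [Nat.add_sub_cancel]
            have e1 : n - (m'+1) + 1 = n - m' := by omega
            have e2 : n + 1 - (m'+1) = n - m' := by omega
            rw [e1, e2, Nat.choose_succ_succ m' k']
            ring

lemma numRuns_eq (n : ℕ) (g : Fin n → Bool) :
    numRuns n (fun j => if h : 1 ≤ j ∧ j ≤ n then
        (if g ⟨j - 1, by omega⟩ then 1 else 0) else 0)
      = (runStarts n false g).card := by
  unfold numRuns
  refine Finset.card_bij'
    (i := fun a ha => (⟨a - 1, by
        have := (Finset.mem_filter.mp ha).1
        rw [Finset.mem_Icc] at this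
        omega⟩ : Fin n))
    (j := fun i _ => (i : ℕ) + 1) ?hi ?hj ?left ?right
  case hi =>
    intro a ha
    rw [Finset.mem_filter] at ha
    obtain ⟨haI, h1, h2⟩ := ha
    rw [Finset.mem_Icc] at haI
    dsimp only at h1 h2
    rw [runStarts, Finset.mem_filter]
    refine ⟨Finset.mem_univ _, ?_, ?_⟩
    · split at h1
      · split at h1
        · assumption
        · omega
      · omega
    · simp only []
      split
      · rfl
      · rename_i hne
        have ha2 : 2 ≤ a := by omega
        rcases h2 with h2 | h2
        · omega
        · split at h2
          · split at h2
            · omega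
            · rename_i hgf
              simp only [Bool.not_eq_true] at hgf
              convert hgf using 2
          · omega
  case hj =>
    intro i hi
    simp only [runStarts, Finset.mem_filter] at hi
    obtain ⟨-, h1, h2⟩ := hi
    rw [Finset.mem_filter, Finset.mem_Icc]
    have hin : (i : ℕ) < n := i.2
    dsimp only
    refine ⟨⟨by omega, by omega⟩, ?_, ?_⟩
    · rw [dif_pos (by omega : 1 ≤ (i:ℕ)+1 ∧ (i:ℕ)+1 ≤ n)]
      have he : (⟨(i:ℕ)+1-1, by omega⟩ : Fin n) = i := by
        ext; simp
      rw [he, h1]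
      rfl
    · rcases Nat.eq_zero_or_pos (i : ℕ) with h0 | h0
      · left; omega
      · right
        rw [if_neg (by omega)] at h2
        rw [dif_pos (by omega : 1 ≤ (i:ℕ)+1-1 ∧ (i:ℕ)+1-1 ≤ n)]
        rw [if_neg]
        simp only [Bool.not_eq_true]
        convert h2 using 2
        exact Fin.ext (by simp)
  case left =>
    intro a ha
    have := (Finset.mem_filter.mp ha).1
    rw [Finset.mem_Icc] at this
    simp only []
    omega
  case right =>
    intro i hi
    ext
    simp

theorem stmt1 (n m k : ℕ) (hn : 1 ≤ n) (hm1 : 1 ≤ m) (hm2 : m ≤ n) (hk : 1 ≤ k) :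
    ((Finset.univ : Finset (Fin n → Bool)).filter (fun f =>
        (∑ i : Fin n, (if f i then 1 else 0)) = m ∧
        numRuns n (fun j => if h : 1 ≤ j ∧ j ≤ n then
            (if f ⟨j - 1, by omega⟩ then 1 else 0) else 0) = k)).card
      = Nat.choose (m - 1) (k - 1) * Nat.choose (n - m + 1) k := by
  have hfilter : ((Finset.univ : Finset (Fin n → Bool)).filter (fun f =>
        (∑ i : Fin n, (if f i then 1 else 0)) = m ∧
        numRuns n (fun j => if h : 1 ≤ j ∧ j ≤ n then
            (if f ⟨j - 1, by omega⟩ then 1 else 0) else 0) = k))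
      = ((Finset.univ : Finset (Fin n → Bool)).filter (fun g =>
        (∑ i : Fin n, (if g i then 1 else 0)) = m ∧ (runStarts n false g).card = k)) := by
    apply Finset.filter_congr
    intro g _
    rw [numRuns_eq]
  rw [hfilter]
  exact (main_count n m k).1 hm1 hm2 hk
end

section
/- Let T_1,…,T_n be i.i.d. uniform on (0,1), I_t(k) = 1{T_k ≤ t}, and X_n(t) = I_t(1) + Σ_{k=1}^{n−1}(1−I_t(k))I_t(k+1). Then for every t ∈ [0,1], Var(X_n(t)) = n·t(1−t)(1−3t+3t²) + t²(1−t)(3−5t). -/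
open MeasureTheory ProbabilityTheory Finset

set_option linter.unusedSectionVars false
set_option linter.unreachableTactic false
set_option linter.unnecessarySeqFocus false
set_option linter.unusedTactic false
set_option linter.unusedTactic false

namespace Stmt9Aux

variable {Ω : Type*} [MeasurableSpace Ω] {μ : Measure Ω} [IsProbabilityMeasure μ]
  {T : ℕ → Ω → ℝ} {t : ℝ}

noncomputable def B (T : ℕ → Ω → ℝ) (t : ℝ) (k : ℕ) (ω : Ω) : ℝ :=
  if T k ω ≤ t then 1 else 0

lemma B01 (T : ℕ → Ω → ℝ) (t : ℝ) (k : ℕ) (ω : Ω) : B T t k ω = 0 ∨ B T t k ω = 1 := by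
  unfold B; split <;> simp

lemma measurable_B (hmeas : ∀ k, Measurable (T k)) (k : ℕ) :
    Measurable (B T t k) :=
  Measurable.ite (measurableSet_le (hmeas k) measurable_const) measurable_const measurable_const

lemma integrable_of_bdd {f : Ω → ℝ} (hf : Measurable f) {C : ℝ} (h : ∀ ω, ‖f ω‖ ≤ C) :
    Integrable f μ :=
  memLp_one_iff_integrable.mp (MemLp.of_bound hf.aestronglyMeasurable C (ae_of_all _ h))

lemma key_prod (hmeas : ∀ k, Measurable (T k))
    (hindep : iIndepFun T μ)
    (hunif : ∀ k, Measure.map (T k) μ = volume.restrict (Set.Ioo (0 : ℝ) 1))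
    (ht : t ∈ Set.Icc (0:ℝ) 1) (S : Finset ℕ) :
    ∫ ω, ∏ k ∈ S, B T t k ω ∂μ = t ^ S.card := by
  have hμA : ∀ k, μ (T k ⁻¹' Set.Iic t) = ENNReal.ofReal t := by
    intro k
    rw [← Measure.map_apply (hmeas k) measurableSet_Iic, hunif k,
      Measure.restrict_apply measurableSet_Iic]
    refine le_antisymm ?_ ?_
    · calc volume (Set.Iic t ∩ Set.Ioo 0 1) ≤ volume (Set.Ioc 0 t) := by
            apply measure_mono; rintro x ⟨hx1, hx2, hx3⟩; exact ⟨hx2, hx1⟩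
      _ = ENNReal.ofReal t := by rw [Real.volume_Ioc, sub_zero]
    · calc ENNReal.ofReal t = volume (Set.Ioo 0 t) := by rw [Real.volume_Ioo, sub_zero]
      _ ≤ volume (Set.Iic t ∩ Set.Ioo 0 1) := by
            apply measure_mono; rintro x ⟨hx1, hx2⟩
            exact ⟨le_of_lt hx2, hx1, lt_of_lt_of_le hx2 ht.2⟩
  have hset : MeasurableSet (⋂ k ∈ (S : Set ℕ), T k ⁻¹' Set.Iic t) :=
    MeasurableSet.biInter (S.countable_toSet)
      (fun k _ => (hmeas k) measurableSet_Iic)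
  have hfun : (fun ω => ∏ k ∈ S, B T t k ω)
      = Set.indicator (⋂ k ∈ (S : Set ℕ), T k ⁻¹' Set.Iic t) (fun _ => (1:ℝ)) := by
    funext ω
    by_cases h : ω ∈ ⋂ k ∈ (S : Set ℕ), T k ⁻¹' Set.Iic t
    · rw [Set.indicator_of_mem h]
      refine Finset.prod_eq_one fun k hk => ?_
      rw [Set.mem_iInter₂] at h
      exact if_pos (h k (Finset.mem_coe.mpr hk))
    · rw [Set.indicator_of_notMem h]
      rw [Set.mem_iInter₂] at h
      push_neg at h
      obtain ⟨k, hk, hk'⟩ := h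
      refine Finset.prod_eq_zero hk ?_
      simp only [Set.mem_preimage, Set.mem_Iic] at hk'
      simp [B, hk']
  rw [hfun, integral_indicator_const _ hset]
  have : μ (⋂ k ∈ (S : Set ℕ), T k ⁻¹' Set.Iic t) = ∏ k ∈ S, μ (T k ⁻¹' Set.Iic t) := by
    have := hindep.measure_inter_preimage_eq_mul S (sets := fun _ => Set.Iic t)
      (fun i _ => measurableSet_Iic)
    simpa using this
  rw [measureReal_def, this]
  simp only [hμA, Finset.prod_const]
  rw [ENNReal.toReal_pow, ENNReal.toReal_ofReal ht.1]
  simp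


noncomputable def W (T : ℕ → Ω → ℝ) (t : ℝ) (k : ℕ) (ω : Ω) : ℝ :=
  (1 - B T t k ω) * B T t (k + 1) ω

lemma measurable_W (hmeas : ∀ k, Measurable (T k)) (k : ℕ) :
    Measurable (W T t k) :=
  (measurable_const.sub (measurable_B hmeas k)).mul (measurable_B hmeas (k + 1))

lemma normB_le (k : ℕ) (ω : Ω) : ‖B T t k ω‖ ≤ 1 := by
  rcases B01 T t k ω with h | h <;> simp [h]

lemma normW_le (k : ℕ) (ω : Ω) : ‖W T t k ω‖ ≤ 1 := by
  unfold W
  rcases B01 T t k ω with h | h <;> rcases B01 T t (k+1) ω with h' | h' <;> simp [h, h']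

lemma integrable_B (hmeas : ∀ k, Measurable (T k)) (k : ℕ) : Integrable (B T t k) μ :=
  integrable_of_bdd (measurable_B hmeas k) (normB_le k)

lemma integrable_W (hmeas : ∀ k, Measurable (T k)) (k : ℕ) : Integrable (W T t k) μ :=
  integrable_of_bdd (measurable_W hmeas k) (normW_le k)

lemma integrable_BB (hmeas : ∀ k, Measurable (T k)) (a b : ℕ) :
    Integrable (fun ω => B T t a ω * B T t b ω) μ := by
  refine integrable_of_bdd ((measurable_B hmeas a).mul (measurable_B hmeas b)) (C := 1) ?_
  intro ω
  rcases B01 T t a ω with h | h <;> rcases B01 T t b ω with h' | h' <;> simp [h, h']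

lemma integrable_BBB (hmeas : ∀ k, Measurable (T k)) (a b c : ℕ) :
    Integrable (fun ω => B T t a ω * B T t b ω * B T t c ω) μ := by
  refine integrable_of_bdd
    (((measurable_B hmeas a).mul (measurable_B hmeas b)).mul (measurable_B hmeas c)) (C := 1) ?_
  intro ω
  rcases B01 T t a ω with h | h <;> rcases B01 T t b ω with h' | h' <;>
    rcases B01 T t c ω with h'' | h'' <;> simp [h, h', h'']

lemma integrable_BBBB (hmeas : ∀ k, Measurable (T k)) (a b c d : ℕ) :
    Integrable (fun ω => B T t a ω * B T t b ω * B T t c ω * B T t d ω) μ := by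
  refine integrable_of_bdd
    ((((measurable_B hmeas a).mul (measurable_B hmeas b)).mul (measurable_B hmeas c)).mul
      (measurable_B hmeas d)) (C := 1) ?_
  intro ω
  rcases B01 T t a ω with h | h <;> rcases B01 T t b ω with h' | h' <;>
    rcases B01 T t c ω with h'' | h'' <;> rcases B01 T t d ω with h''' | h''' <;>
    simp [h, h', h'', h''']

lemma integrable_BW (hmeas : ∀ k, Measurable (T k)) (a k : ℕ) :
    Integrable (fun ω => B T t a ω * W T t k ω) μ := by
  refine integrable_of_bdd ((measurable_B hmeas a).mul (measurable_W hmeas k)) (C := 1) ?_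
  intro ω
  rw [norm_mul]
  calc ‖B T t a ω‖ * ‖W T t k ω‖ ≤ 1 * 1 :=
        mul_le_mul (normB_le a ω) (normW_le k ω) (norm_nonneg _) zero_le_one
    _ = 1 := mul_one 1

lemma integrable_WW (hmeas : ∀ k, Measurable (T k)) (k j : ℕ) :
    Integrable (fun ω => W T t k ω * W T t j ω) μ := by
  refine integrable_of_bdd ((measurable_W hmeas k).mul (measurable_W hmeas j)) (C := 1) ?_
  intro ω
  rw [norm_mul]
  calc ‖W T t k ω‖ * ‖W T t j ω‖ ≤ 1 * 1 :=
        mul_le_mul (normW_le k ω) (normW_le j ω) (norm_nonneg _) zero_le_one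
    _ = 1 := mul_one 1


variable (hmeas : ∀ k, Measurable (T k))
    (hindep : iIndepFun T μ)
    (hunif : ∀ k, Measure.map (T k) μ = volume.restrict (Set.Ioo (0 : ℝ) 1))
    (ht : t ∈ Set.Icc (0:ℝ) 1)

include hmeas hindep hunif ht

lemma int1 (a : ℕ) : ∫ ω, B T t a ω ∂μ = t := by
  have := key_prod hmeas hindep hunif ht {a}
  simpa using this

lemma int2 {a b : ℕ} (hab : a ≠ b) : ∫ ω, B T t a ω * B T t b ω ∂μ = t ^ 2 := by
  have := key_prod hmeas hindep hunif ht {a, b}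
  rw [Finset.card_pair hab] at this
  rw [← this]
  congr 1
  funext ω
  rw [Finset.prod_pair hab]

lemma int3 {a b c : ℕ} (hab : a ≠ b) (hac : a ≠ c) (hbc : b ≠ c) :
    ∫ ω, B T t a ω * B T t b ω * B T t c ω ∂μ = t ^ 3 := by
  have := key_prod hmeas hindep hunif ht {a, b, c}
  rw [show ({a, b, c} : Finset ℕ).card = 3 by
    rw [Finset.card_insert_of_notMem (by simp [hab, hac]), Finset.card_pair hbc]] at this
  rw [← this]
  congr 1
  funext ω
  rw [Finset.prod_insert (by simp [hab, hac]), Finset.prod_pair hbc, mul_assoc]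

lemma int4 {a b c d : ℕ} (hab : a ≠ b) (hac : a ≠ c) (had : a ≠ d) (hbc : b ≠ c)
    (hbd : b ≠ d) (hcd : c ≠ d) :
    ∫ ω, B T t a ω * B T t b ω * B T t c ω * B T t d ω ∂μ = t ^ 4 := by
  have := key_prod hmeas hindep hunif ht {a, b, c, d}
  rw [show ({a, b, c, d} : Finset ℕ).card = 4 by
    rw [Finset.card_insert_of_notMem (by simp [hab, hac, had]),
      Finset.card_insert_of_notMem (by simp [hbc, hbd]), Finset.card_pair hcd]] at this
  rw [← this]
  congr 1
  funext ω
  rw [Finset.prod_insert (by simp [hab, hac, had]), Finset.prod_insert (by simp [hbc, hbd]),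
    Finset.prod_pair hcd]
  ring


lemma intW (k : ℕ) : ∫ ω, W T t k ω ∂μ = t - t ^ 2 := by
  have e : W T t k = fun ω => B T t (k+1) ω - B T t k ω * B T t (k+1) ω := by
    funext ω; unfold W; ring
  rw [e, integral_sub (integrable_B hmeas (k+1)) (integrable_BB hmeas k (k+1)),
    int1 hmeas hindep hunif ht, int2 hmeas hindep hunif ht (by omega)]

lemma intBW (k : ℕ) (hk : k ≠ 0) :
    ∫ ω, B T t 1 ω * W T t k ω ∂μ = (t ^ 2 - t ^ 3) - (if k = 1 then t ^ 2 - t ^ 3 else 0) := by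
  by_cases hk1 : k = 1
  · subst hk1
    have e : (fun ω => B T t 1 ω * W T t 1 ω) = fun _ => (0 : ℝ) := by
      funext ω; unfold W
      rcases B01 T t 1 ω with h | h <;> simp [h]
    rw [e, integral_zero]
    simp
  · have e : (fun ω => B T t 1 ω * W T t k ω)
        = fun ω => B T t 1 ω * B T t (k+1) ω - B T t 1 ω * B T t k ω * B T t (k+1) ω := by
      funext ω; unfold W; ring
    rw [e, integral_sub (integrable_BB hmeas 1 (k+1)) (integrable_BBB hmeas 1 k (k+1)),
      int2 hmeas hindep hunif ht (by omega),
      int3 hmeas hindep hunif ht (by omega) (by omega) (by omega), if_neg hk1]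
    ring

lemma intWW (k j : ℕ) :
    ∫ ω, W T t k ω * W T t j ω ∂μ
      = (t - t ^ 2) ^ 2 + (if k = j then (t - t ^ 2) - (t - t ^ 2) ^ 2 else 0)
        - (if j = k + 1 then (t - t ^ 2) ^ 2 else 0)
        - (if k = j + 1 then (t - t ^ 2) ^ 2 else 0) := by
  by_cases hkj : k = j
  · subst hkj
    have e : (fun ω => W T t k ω * W T t k ω) = W T t k := by
      funext ω; unfold W
      rcases B01 T t k ω with h | h <;> rcases B01 T t (k+1) ω with h' | h' <;> simp [h, h']
    rw [e, intW hmeas hindep hunif ht]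
    split_ifs <;> first | ring1 | (exfalso; omega)
  · by_cases hjk1 : j = k + 1
    · subst hjk1
      have e : (fun ω => W T t k ω * W T t (k+1) ω) = fun _ => (0 : ℝ) := by
        funext ω; unfold W
        rcases B01 T t (k+1) ω with h | h <;> simp [h]
      rw [e, integral_zero]
      split_ifs <;> first | ring1 | (exfalso; omega)
    · by_cases hkj1 : k = j + 1
      · subst hkj1
        have e : (fun ω => W T t (j+1) ω * W T t j ω) = fun _ => (0 : ℝ) := by
          funext ω; unfold W
          rcases B01 T t (j+1) ω with h | h <;> simp [h]
        rw [e, integral_zero]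
        split_ifs <;> first | ring1 | (exfalso; omega)
      · have e : (fun ω => W T t k ω * W T t j ω)
            = fun ω => (B T t (k+1) ω * B T t (j+1) ω
                - B T t k ω * B T t (k+1) ω * B T t (j+1) ω)
              - (B T t (k+1) ω * B T t j ω * B T t (j+1) ω
                - B T t k ω * B T t (k+1) ω * B T t j ω * B T t (j+1) ω) := by
          funext ω; unfold W; ring
        have i1 : Integrable (fun ω => B T t (k+1) ω * B T t (j+1) ω
            - B T t k ω * B T t (k+1) ω * B T t (j+1) ω) μ :=
          (integrable_BB hmeas (k+1) (j+1)).sub (integrable_BBB hmeas k (k+1) (j+1))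
        have i2 : Integrable (fun ω => B T t (k+1) ω * B T t j ω * B T t (j+1) ω
            - B T t k ω * B T t (k+1) ω * B T t j ω * B T t (j+1) ω) μ :=
          (integrable_BBB hmeas (k+1) j (j+1)).sub (integrable_BBBB hmeas k (k+1) j (j+1))
        rw [e, integral_sub i1 i2,
          integral_sub (integrable_BB hmeas (k+1) (j+1)) (integrable_BBB hmeas k (k+1) (j+1)),
          integral_sub (integrable_BBB hmeas (k+1) j (j+1)) (integrable_BBBB hmeas k (k+1) j (j+1)),
          int2 hmeas hindep hunif ht (by omega),
          int3 hmeas hindep hunif ht (by omega) (by omega) (by omega),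
          int3 hmeas hindep hunif ht (by omega) (by omega) (by omega),
          int4 hmeas hindep hunif ht (by omega) (by omega) (by omega) (by omega) (by omega)
            (by omega)]
        split_ifs <;> first | ring1 | (exfalso; omega)


end Stmt9Aux

open Stmt9Aux

theorem stmt9 {Ω : Type*} [MeasurableSpace Ω] (μ : Measure Ω) [IsProbabilityMeasure μ]
    (n : ℕ) (hn : 2 ≤ n) (T : ℕ → Ω → ℝ) (hmeas : ∀ k, Measurable (T k))
    (hindep : iIndepFun T μ)
    (hunif : ∀ k, Measure.map (T k) μ = volume.restrict (Set.Ioo (0 : ℝ) 1))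
    (t : ℝ) (ht : t ∈ Set.Icc (0 : ℝ) 1) :
    variance (fun ω => (if T 1 ω ≤ t then (1 : ℝ) else 0) +
        ∑ k ∈ Finset.Icc 1 (n - 1),
          (1 - (if T k ω ≤ t then (1 : ℝ) else 0)) *
            (if T (k + 1) ω ≤ t then (1 : ℝ) else 0)) μ
      = (n : ℝ) * (t * (1 - t) * (1 - 3 * t + 3 * t ^ 2))
        + t ^ 2 * (1 - t) * (3 - 5 * t) := by
  obtain ⟨N, rfl⟩ : ∃ N, n = N + 2 := ⟨n - 2, by omega⟩
  show variance (fun ω => B T t 1 ω + ∑ k ∈ Finset.Icc 1 (N + 1), W T t k ω) μ = _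
  set s : Finset ℕ := Finset.Icc 1 (N + 1) with hs
  have hcard : s.card = N + 1 := by rw [hs, Nat.card_Icc]; omega
  set X : Ω → ℝ := fun ω => B T t 1 ω + ∑ k ∈ s, W T t k ω with hX
  -- Memℒp 2
  have hXm : Measurable X :=
    (measurable_B hmeas 1).add (Finset.measurable_sum s fun k _ => measurable_W hmeas k)
  have hXb : ∀ ω, ‖X ω‖ ≤ (N + 2 : ℝ) := by
    intro ω
    calc ‖X ω‖ ≤ ‖B T t 1 ω‖ + ‖∑ k ∈ s, W T t k ω‖ := norm_add_le _ _
      _ ≤ 1 + ∑ k ∈ s, ‖W T t k ω‖ := by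
          gcongr
          exacts [normB_le 1 ω, norm_sum_le _ _]
      _ ≤ 1 + ∑ k ∈ s, (1 : ℝ) := by
          gcongr with k hk
          exact normW_le k ω
      _ = (N + 2 : ℝ) := by
          rw [Finset.sum_const, hcard]
          push_cast
          ring
  have hXL2 : MemLp X 2 μ :=
    MemLp.of_bound hXm.aestronglyMeasurable _ (ae_of_all _ hXb)
  rw [variance_eq_sub hXL2]
  -- mean
  have hEX : ∫ ω, X ω ∂μ = t + (N + 1 : ℝ) * (t - t ^ 2) := by
    rw [hX]
    rw [integral_add (integrable_B hmeas 1) (integrable_finset_sum s fun k _ => integrable_W hmeas k),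
      integral_finset_sum s fun k _ => integrable_W hmeas k,
      int1 hmeas hindep hunif ht]
    congr 1
    rw [Finset.sum_congr rfl fun k _ => intW hmeas hindep hunif ht k, Finset.sum_const, hcard,
      nsmul_eq_mul]
    push_cast
    ring
  -- second moment
  have hX2 : X ^ 2 = fun ω => (B T t 1 ω * B T t 1 ω
      + ∑ k ∈ s, 2 * (B T t 1 ω * W T t k ω))
      + ∑ k ∈ s, ∑ j ∈ s, W T t k ω * W T t j ω := by
    funext ω
    simp only [Pi.pow_apply, hX]
    have h1 : ∀ a b : ℝ, (a + b) ^ 2 = a * a + 2 * (a * b) + b * b := fun a b => by ring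
    rw [h1, Finset.sum_mul_sum s s (fun k => W T t k ω) (fun j => W T t j ω),
      Finset.mul_sum s (fun k => W T t k ω) (B T t 1 ω),
      Finset.mul_sum s (fun k => B T t 1 ω * W T t k ω) (2 : ℝ)]
  have hB1B1 : ∫ ω, B T t 1 ω * B T t 1 ω ∂μ = t := by
    have e : (fun ω => B T t 1 ω * B T t 1 ω) = B T t 1 := by
      funext ω; rcases B01 T t 1 ω with h | h <;> simp [h]
    rw [e, int1 hmeas hindep hunif ht]
  have hsumBW : ∑ k ∈ s, ∫ ω, 2 * (B T t 1 ω * W T t k ω) ∂μ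
      = 2 * ((N + 1 : ℝ) * (t ^ 2 - t ^ 3) - (t ^ 2 - t ^ 3)) := by
    have e : ∀ k ∈ s, ∫ ω, 2 * (B T t 1 ω * W T t k ω) ∂μ
        = 2 * ((t ^ 2 - t ^ 3) - (if k = 1 then t ^ 2 - t ^ 3 else 0)) := by
      intro k hk
      rw [integral_const_mul 2 _, intBW hmeas hindep hunif ht k (by
        rw [hs] at hk; simp at hk; omega)]
    rw [Finset.sum_congr rfl e, ← Finset.mul_sum, Finset.sum_sub_distrib, Finset.sum_const, hcard,
      Finset.sum_ite_eq' s 1 (fun _ => t ^ 2 - t ^ 3), if_pos (by rw [hs]; simp)]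
    rw [nsmul_eq_mul]
    push_cast
    ring
  have hsumWW : ∑ k ∈ s, ∑ j ∈ s, ∫ ω, W T t k ω * W T t j ω ∂μ
      = (N + 1 : ℝ) ^ 2 * (t - t ^ 2) ^ 2 + (N + 1 : ℝ) * ((t - t ^ 2) - (t - t ^ 2) ^ 2)
        - (N : ℝ) * (t - t ^ 2) ^ 2 - (N : ℝ) * (t - t ^ 2) ^ 2 := by
    have e : ∀ k ∈ s, ∀ j ∈ s, ∫ ω, W T t k ω * W T t j ω ∂μ
        = (t - t ^ 2) ^ 2 + (if k = j then (t - t ^ 2) - (t - t ^ 2) ^ 2 else 0)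
          - (if j = k + 1 then (t - t ^ 2) ^ 2 else 0)
          - (if k = j + 1 then (t - t ^ 2) ^ 2 else 0) := fun k _ j _ =>
      intWW hmeas hindep hunif ht k j
    calc ∑ k ∈ s, ∑ j ∈ s, ∫ ω, W T t k ω * W T t j ω ∂μ
        = ∑ k ∈ s, ∑ j ∈ s, ((t - t ^ 2) ^ 2
            + (if k = j then (t - t ^ 2) - (t - t ^ 2) ^ 2 else 0)
            - (if j = k + 1 then (t - t ^ 2) ^ 2 else 0)
            - (if k = j + 1 then (t - t ^ 2) ^ 2 else 0)) := by
          refine Finset.sum_congr rfl fun k hk => Finset.sum_congr rfl fun j hj => e k hk j hj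
      _ = (∑ k ∈ s, ∑ j ∈ s, (t - t ^ 2) ^ 2)
            + (∑ k ∈ s, ∑ j ∈ s, (if k = j then (t - t ^ 2) - (t - t ^ 2) ^ 2 else 0))
            - (∑ k ∈ s, ∑ j ∈ s, (if j = k + 1 then (t - t ^ 2) ^ 2 else 0))
            - (∑ k ∈ s, ∑ j ∈ s, (if k = j + 1 then (t - t ^ 2) ^ 2 else 0)) := by
          simp only [Finset.sum_sub_distrib, Finset.sum_add_distrib]
      _ = (N + 1 : ℝ) ^ 2 * (t - t ^ 2) ^ 2 + (N + 1 : ℝ) * ((t - t ^ 2) - (t - t ^ 2) ^ 2)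
            - (N : ℝ) * (t - t ^ 2) ^ 2 - (N : ℝ) * (t - t ^ 2) ^ 2 := by
          have c1 : ∑ k ∈ s, ∑ j ∈ s, ((t - t ^ 2) ^ 2 : ℝ) = (N + 1 : ℝ) ^ 2 * (t - t ^ 2) ^ 2 := by
            rw [Finset.sum_const, Finset.sum_const, hcard, nsmul_eq_mul, nsmul_eq_mul]
            push_cast
            ring
          have c2 : ∑ k ∈ s, ∑ j ∈ s, (if k = j then (t - t ^ 2) - (t - t ^ 2) ^ 2 else 0)
              = (N + 1 : ℝ) * ((t - t ^ 2) - (t - t ^ 2) ^ 2) := by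
            rw [Finset.sum_congr rfl fun k hk => by
              rw [Finset.sum_ite_eq s k (fun _ => (t - t ^ 2) - (t - t ^ 2) ^ 2), if_pos hk]]
            rw [Finset.sum_const, hcard, nsmul_eq_mul]
            push_cast
            ring
          have adj : ∀ k ∈ s, ((if k + 1 ∈ s then ((t - t^2)^2 : ℝ) else 0))
              = (if k ∈ Finset.Icc 1 N then ((t - t^2)^2 : ℝ) else 0) := by
            intro k hks
            rw [hs] at hks
            simp only [Finset.mem_Icc] at hks
            rw [hs]
            exact if_congr (by simp only [Finset.mem_Icc]; omega) rfl rfl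
          have hinter : s ∩ Finset.Icc 1 N = Finset.Icc 1 N := by
            rw [Finset.inter_eq_right, hs]
            intro x hx
            simp only [Finset.mem_Icc] at *
            omega
          have c3 : ∑ k ∈ s, ∑ j ∈ s, (if j = k + 1 then ((t - t ^ 2) ^ 2 : ℝ) else 0)
              = (N : ℝ) * (t - t ^ 2) ^ 2 := by
            rw [Finset.sum_congr rfl fun k _ =>
              (Finset.sum_ite_eq' s (k + 1) (fun _ => ((t - t ^ 2) ^ 2 : ℝ)))]
            rw [Finset.sum_congr rfl fun k hk => adj k hk, Finset.sum_ite_mem, hinter,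
              Finset.sum_const, Nat.card_Icc, Nat.add_sub_cancel, nsmul_eq_mul]
          have c4 : ∑ k ∈ s, ∑ j ∈ s, (if k = j + 1 then ((t - t ^ 2) ^ 2 : ℝ) else 0)
              = (N : ℝ) * (t - t ^ 2) ^ 2 := by
            rw [Finset.sum_comm]
            rw [Finset.sum_congr rfl fun j _ =>
              (Finset.sum_ite_eq' s (j + 1) (fun _ => ((t - t ^ 2) ^ 2 : ℝ)))]
            rw [Finset.sum_congr rfl fun j hj => adj j hj, Finset.sum_ite_mem, hinter,
              Finset.sum_const, Nat.card_Icc, Nat.add_sub_cancel, nsmul_eq_mul]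
          rw [c1, c2, c3, c4]
  have hEX2 : ∫ ω, (X ^ 2) ω ∂μ = (t + 2 * ((N + 1 : ℝ) * (t ^ 2 - t ^ 3) - (t ^ 2 - t ^ 3)))
      + ((N + 1 : ℝ) ^ 2 * (t - t ^ 2) ^ 2 + (N + 1 : ℝ) * ((t - t ^ 2) - (t - t ^ 2) ^ 2)
        - (N : ℝ) * (t - t ^ 2) ^ 2 - (N : ℝ) * (t - t ^ 2) ^ 2) := by
    rw [hX2]
    have i1 : Integrable (fun ω => B T t 1 ω * B T t 1 ω
        + ∑ k ∈ s, 2 * (B T t 1 ω * W T t k ω)) μ :=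
      (integrable_BB hmeas 1 1).add
        (integrable_finset_sum s fun k _ => (integrable_BW hmeas 1 k).const_mul 2)
    have i2 : Integrable (fun ω => ∑ k ∈ s, ∑ j ∈ s, W T t k ω * W T t j ω) μ :=
      integrable_finset_sum s fun k _ => integrable_finset_sum s fun j _ =>
        integrable_WW hmeas k j
    rw [integral_add i1 i2,
      integral_add (integrable_BB hmeas 1 1)
        (integrable_finset_sum s fun k _ => (integrable_BW hmeas 1 k).const_mul 2),
      integral_finset_sum s fun k _ => (integrable_BW hmeas 1 k).const_mul 2,
      integral_finset_sum s fun k _ => integrable_finset_sum s fun j _ =>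
        integrable_WW hmeas k j]
    rw [Finset.sum_congr rfl fun k _ => integral_finset_sum s fun j _ => integrable_WW hmeas k j]
    rw [hB1B1, hsumBW, hsumWW]
  rw [hEX2, hEX]
  push_cast
  ring
end

section
/- Let (M(x))_{x∈[0,x₁]} be an L² martingale with M(0) = 0 and Var(M(x)) ≤ K·x for all x ∈ [0,x₁], where K ≥ 0 and x₁ > 0. Then for every a > 0 and every x₀ ∈ (0, x₁]: E[ max_{x₀ ≤ x ≤ x₁} ( M(x) − a·x² )₊ ] ≤ 4K/(a·x₀), where y₊ = max(y,0). -/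
open MeasureTheory ProbabilityTheory Filter Set Topology Finset
open scoped ENNReal NNReal

lemma aux_int_mul {Ω : Type*} [MeasurableSpace Ω] {μ : Measure Ω} {f g : Ω → ℝ}
    (hf : MemLp f 2 μ) (hg : MemLp g 2 μ) : Integrable (fun ω => f ω * g ω) μ := by
  refine Integrable.mono' ((hf.integrable_sq.add hg.integrable_sq).div_const 2)
    (hf.1.mul hg.1) (Filter.Eventually.of_forall fun ω => ?_)
  simp only [Pi.add_apply]
  rw [Real.norm_eq_abs, abs_mul]
  nlinarith [sq_nonneg (|f ω| - |g ω|), sq_abs (f ω), sq_abs (g ω), abs_nonneg (f ω), abs_nonneg (g ω)]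

lemma aux_improper : ∀ {c : ℝ}, 0 < c →
    ∫ t in Set.Ioi (0:ℝ), ((t + c)^2)⁻¹ = c⁻¹ := by
  intro c hc
  have hderiv : ∀ t ∈ Set.Ici (0:ℝ), HasDerivAt (fun t => -(t + c)⁻¹) (((t + c)^2)⁻¹) t := by
    intro t ht
    have ht' : (0:ℝ) ≤ t := ht
    have h1 : HasDerivAt (fun t : ℝ => t + c) 1 t := (hasDerivAt_id t).add_const c
    have hne : t + c ≠ 0 := by positivity
    have h2 := (h1.inv hne).neg
    exact h2.congr_deriv (by ring)
  have hpos : ∀ t ∈ Set.Ioi (0:ℝ), 0 ≤ ((t + c)^2)⁻¹ := fun t ht => by positivity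
  have htend : Tendsto (fun t : ℝ => -(t + c)⁻¹) atTop (𝓝 0) := by
    rw [show (0:ℝ) = -0 by ring]
    exact (tendsto_inv_atTop_zero.comp (tendsto_atTop_add_const_right _ c tendsto_id)).neg
  have := integral_Ioi_of_hasDerivAt_of_nonneg' hderiv hpos htend
  rw [this]
  simp

lemma aux_tail_integral {c V : ℝ} (hc : 0 < c) (hV : 0 ≤ V) :
    ∫⁻ t in Set.Ioi (0:ℝ), ENNReal.ofReal (V / (t + c)^2) ≤ ENNReal.ofReal (V / c) := by
  have hderiv : ∀ t ∈ Set.Ici (0:ℝ), HasDerivAt (fun t => -(t + c)⁻¹) (((t + c)^2)⁻¹) t := by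
    intro t ht
    have ht' : (0:ℝ) ≤ t := ht
    have h1 : HasDerivAt (fun t : ℝ => t + c) 1 t := (hasDerivAt_id t).add_const c
    have hne : t + c ≠ 0 := by positivity
    have h2 := (h1.inv hne).neg
    exact h2.congr_deriv (by ring)
  have hpos : ∀ t ∈ Set.Ioi (0:ℝ), 0 ≤ ((t + c)^2)⁻¹ := fun t ht => by positivity
  have htend : Tendsto (fun t : ℝ => -(t + c)⁻¹) atTop (𝓝 0) := by
    rw [show (0:ℝ) = -0 by ring]
    exact (tendsto_inv_atTop_zero.comp (tendsto_atTop_add_const_right _ c tendsto_id)).neg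
  have hint : IntegrableOn (fun t : ℝ => ((t + c)^2)⁻¹) (Set.Ioi 0) :=
    integrableOn_Ioi_deriv_of_nonneg' hderiv hpos htend
  calc ∫⁻ t in Set.Ioi (0:ℝ), ENNReal.ofReal (V / (t + c)^2)
      = ∫⁻ t in Set.Ioi (0:ℝ), ENNReal.ofReal V * ENNReal.ofReal (((t + c)^2)⁻¹) := by
        apply lintegral_congr_ae
        filter_upwards [ae_restrict_mem measurableSet_Ioi] with t ht
        rw [← ENNReal.ofReal_mul hV, div_eq_mul_inv]
    _ = ENNReal.ofReal V * ∫⁻ t in Set.Ioi (0:ℝ), ENNReal.ofReal (((t + c)^2)⁻¹) :=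
        lintegral_const_mul' _ _ ENNReal.ofReal_ne_top
    _ = ENNReal.ofReal V * ENNReal.ofReal c⁻¹ := by
        rw [← ofReal_integral_eq_lintegral_ofReal hint
          (Filter.Eventually.of_forall fun t => by positivity), aux_improper hc]
    _ = ENNReal.ofReal (V / c) := by rw [← ENNReal.ofReal_mul hV, div_eq_mul_inv]
    _ ≤ ENNReal.ofReal (V / c) := le_rfl

lemma aux_doob_sq {Ω : Type*} [m0 : MeasurableSpace Ω] (μ : Measure Ω) [IsProbabilityMeasure μ]
    (ℱ : Filtration ℝ m0) (M : ℝ → Ω → ℝ) (hmart : Martingale M ℱ μ)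
    (τ : ℕ → ℝ) (hτ : Monotone τ) (hL2 : ∀ j, MemLp (M (τ j)) 2 μ)
    (n : ℕ) (lam : ℝ) (hlam : 0 < lam) :
    μ {ω | ∃ j ≤ n, lam ≤ M (τ j) ω}
      ≤ ENNReal.ofReal ((∫ ω, (M (τ n) ω)^2 ∂μ) / lam^2) := by
  set 𝒢 : Filtration ℕ m0 := ⟨fun j => ℱ (τ j), fun i j hij => ℱ.mono (hτ hij), fun j => ℱ.le _⟩
    with h𝒢
  set f : ℕ → Ω → ℝ := fun j ω => (M (τ j) ω)^2 with hf
  have hint : ∀ j, Integrable (f j) μ := fun j => (hL2 j).integrable_sq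
  have hadapt : StronglyAdapted 𝒢 f := by
    intro j
    exact (hmart.stronglyAdapted (τ j)).pow 2
  have hsub : Submartingale f 𝒢 μ := by
    refine ⟨hadapt, fun i j hij => ?_, hint⟩
    set s := τ i
    set t := τ j
    have hst : s ≤ t := hτ hij
    have hMs : StronglyMeasurable[ℱ s] (M s) := hmart.stronglyAdapted s
    have hMsInt : Integrable (M s) μ := (hL2 i).integrable (by norm_num)
    have hMtInt : Integrable (M t) μ := (hL2 j).integrable (by norm_num)
    have hmul : Integrable (fun ω => M s ω * M t ω) μ := aux_int_mul (hL2 i) (hL2 j)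
    have hsq_s : Integrable (fun ω => (M s ω)^2) μ := (hL2 i).integrable_sq
    -- condexp of 2*Ms*Mt - Ms^2
    have hpull : μ[(fun ω => M s ω * M t ω)|ℱ s] =ᵐ[μ] fun ω => M s ω * (μ[M t|ℱ s]) ω := by
      have := condExp_mul_of_stronglyMeasurable_left hMs (μ := μ) ?_ hMtInt
      · exact this
      · exact hmul
    have hmartst : μ[M t|ℱ s] =ᵐ[μ] M s := hmart.condExp_ae_eq hst
    have hsqs : μ[(fun ω => (M s ω)^2)|ℱ s] =ᵐ[μ] fun ω => (M s ω)^2 := by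
      rw [condExp_of_stronglyMeasurable (ℱ.le s) (f := fun ω => (M s ω)^2) (hMs.pow 2) hsq_s]
    have hmono : (fun ω => 2 * (M s ω * M t ω) - (M s ω)^2) ≤ᵐ[μ] fun ω => (M t ω)^2 :=
      Filter.Eventually.of_forall fun ω => by dsimp only; nlinarith [sq_nonneg (M t ω - M s ω)]
    have hcmono := condExp_mono (μ := μ) (m := ℱ s)
      ((hmul.const_mul 2).sub hsq_s) (hint j) hmono
    -- compute lhs condexp
    have hlhs : μ[(fun ω => 2 * (M s ω * M t ω) - (M s ω)^2)|ℱ s]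
        =ᵐ[μ] fun ω => (M s ω)^2 := by
      have h1 : μ[(fun ω => 2 * (M s ω * M t ω) - (M s ω)^2)|ℱ s]
          =ᵐ[μ] μ[(fun ω => 2 * (M s ω * M t ω))|ℱ s] - μ[(fun ω => (M s ω)^2)|ℱ s] :=
        condExp_sub (hmul.const_mul 2) hsq_s _
      have h2 : μ[(fun ω => 2 * (M s ω * M t ω))|ℱ s]
          =ᵐ[μ] (2:ℝ) • μ[(fun ω => M s ω * M t ω)|ℱ s] := by
        have := condExp_smul (μ := μ) (m := ℱ s) (2:ℝ) (fun ω => M s ω * M t ω)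
        refine Filter.EventuallyEq.trans ?_ this
        apply Filter.EventuallyEq.refl
      filter_upwards [h1, h2, hpull, hmartst, hsqs] with ω e1 e2 e3 e4 e5
      rw [e1]
      simp only [Pi.sub_apply, Pi.smul_apply, smul_eq_mul] at *
      rw [e2, e3, e4, e5]
      ring
    filter_upwards [hcmono, hlhs] with ω e1 e2
    exact le_of_eq_of_le e2.symm e1
  -- apply maximal inequality
  set ε : NNReal := (lam^2).toNNReal with hε
  have hnonneg : 0 ≤ f := fun j ω => sq_nonneg _
  have hmax := maximal_ineq hsub hnonneg (ε := ε) n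
  set A := {ω | (ε:ℝ) ≤ (Finset.range (n+1)).sup' Finset.nonempty_range_add_one fun k => f k ω}
  have hsubset : {ω | ∃ j ≤ n, lam ≤ M (τ j) ω} ⊆ A := by
    intro ω ⟨j, hj, hω⟩
    have hcoe : (ε:ℝ) = lam^2 := Real.coe_toNNReal _ (sq_nonneg _)
    simp only [A, Set.mem_setOf_eq, hcoe]
    refine le_trans ?_ (Finset.le_sup' (fun k => f k ω) (Finset.mem_range.2 (Nat.lt_succ_of_le hj)))
    have : lam^2 ≤ (M (τ j) ω)^2 := by nlinarith
    simpa [hf] using this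
  have hsetle : ENNReal.ofReal (∫ ω in A, f n ω ∂μ) ≤ ENNReal.ofReal (∫ ω, f n ω ∂μ) :=
    ENNReal.ofReal_le_ofReal (setIntegral_le_integral (hint n)
      (Filter.Eventually.of_forall fun ω => sq_nonneg _))
  have hεms : (ε:ℝ≥0∞) * μ A ≤ ENNReal.ofReal (∫ ω, f n ω ∂μ) := by
    calc (ε:ℝ≥0∞) * μ A = ε • μ A := rfl
      _ ≤ ENNReal.ofReal (∫ ω in A, f n ω ∂μ) := hmax
      _ ≤ _ := hsetle
  have hεne : (ε:ℝ≥0∞) ≠ 0 := by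
    simp only [hε, ne_eq, ENNReal.coe_eq_zero, Real.toNNReal_eq_zero, not_le]
    positivity
  have hεnetop : (ε:ℝ≥0∞) ≠ ⊤ := ENNReal.coe_ne_top
  have hεms' : μ A * (ε:ℝ≥0∞) ≤ ENNReal.ofReal (∫ ω, f n ω ∂μ) := by
    rw [mul_comm]; exact hεms
  have := (ENNReal.le_div_iff_mul_le (Or.inl hεne) (Or.inl hεnetop)).2 hεms'
  refine le_trans (measure_mono hsubset) (le_trans this ?_)
  have hcoe : (ε:ℝ≥0∞) = ENNReal.ofReal (lam^2) := rfl
  rw [hcoe, ← ENNReal.ofReal_div_of_pos (by positivity)]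

lemma aux_block {Ω : Type*} [m0 : MeasurableSpace Ω] (μ : Measure Ω) [IsProbabilityMeasure μ]
    (ℱ : Filtration ℝ m0) (M : ℝ → Ω → ℝ) (hmart : Martingale M ℱ μ)
    (τ : ℕ → ℝ) (hτ : Monotone τ) (hL2 : ∀ j, MemLp (M (τ j)) 2 μ)
    (n : ℕ) (c V : ℝ) (hc : 0 < c) (hV : 0 ≤ V)
    (hvar : ∫ ω, (M (τ n) ω)^2 ∂μ ≤ V) (φ : ℕ → ℝ) (hφ : ∀ j ≤ n, c ≤ φ j) :
    ∫⁻ ω, ENNReal.ofReal (max ((Finset.range (n+1)).sup' Finset.nonempty_range_add_one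
        (fun j => M (τ j) ω - φ j)) 0) ∂μ ≤ ENNReal.ofReal (V / c) := by
  set F : Ω → ℝ := fun ω => max ((Finset.range (n+1)).sup' Finset.nonempty_range_add_one
      (fun j => M (τ j) ω - φ j)) 0 with hF
  have hmeas : Measurable F := by
    apply Measurable.max _ measurable_const
    exact Finset.measurable_range_sup'' fun k _ =>
      ((hmart.stronglyAdapted (τ k)).measurable.le (ℱ.le _)).sub measurable_const
  have hnn : 0 ≤ᵐ[μ] F := Filter.Eventually.of_forall fun ω => le_max_right _ _
  rw [lintegral_eq_lintegral_meas_lt μ hnn hmeas.aemeasurable]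
  refine le_trans (lintegral_mono_ae ?_) (aux_tail_integral hc hV)
  filter_upwards [ae_restrict_mem measurableSet_Ioi] with t ht
  have ht' : (0:ℝ) < t := ht
  have hsubset : {ω | t < F ω} ⊆ {ω | ∃ j ≤ n, t + c ≤ M (τ j) ω} := by
    intro ω hω
    simp only [Set.mem_setOf_eq, hF, max_lt_iff] at hω
    have h1 : t < (Finset.range (n+1)).sup' Finset.nonempty_range_add_one
        (fun j => M (τ j) ω - φ j) := by
      rcases lt_max_iff.1 hω with h | h
      · exact h
      · linarith
    obtain ⟨j, hj, hjt⟩ := (Finset.lt_sup'_iff _).1 h1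
    exact ⟨j, Nat.lt_succ_iff.1 (Finset.mem_range.1 hj),
      by have := hφ j (Nat.lt_succ_iff.1 (Finset.mem_range.1 hj)); linarith⟩
  refine le_trans (measure_mono hsubset) ?_
  refine le_trans (aux_doob_sq μ ℱ M hmart τ hτ hL2 n (t + c) (by linarith)) ?_
  apply ENNReal.ofReal_le_ofReal
  gcongr

theorem stmt14 {Ω : Type*} [m0 : MeasurableSpace Ω] (μ : Measure Ω) [IsProbabilityMeasure μ]
    (ℱ : Filtration ℝ m0) (M : ℝ → Ω → ℝ) (x₁ K : ℝ) (hx₁ : 0 < x₁) (hK : 0 ≤ K)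
    (hmart : Martingale M ℱ μ)
    (hM0 : ∀ ω, M 0 ω = 0)
    (hL2 : ∀ x ∈ Set.Icc (0 : ℝ) x₁, MemLp (M x) 2 μ)
    (hvar : ∀ x ∈ Set.Icc (0 : ℝ) x₁, variance (M x) μ ≤ K * x)
    (hrc : ∀ ω, ∀ x, ContinuousWithinAt (fun y => M y ω) (Set.Ici x) x)
    (a x₀ : ℝ) (ha : 0 < a) (hx₀ : 0 < x₀) (hx₀₁ : x₀ ≤ x₁) :
    ∫⁻ ω, ENNReal.ofReal (⨆ x ∈ Set.Icc x₀ x₁, max (M x ω - a * x ^ 2) 0) ∂μ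
      ≤ ENNReal.ofReal (4 * K / (a * x₀)) := by
  classical
  set l : ℕ → ℝ := fun k => 2^k * x₀ with hl
  set b : ℕ → ℝ := fun k => min (2^(k+1) * x₀) x₁ with hb
  set pt : ℕ → ℕ → ℕ → ℝ := fun k m j => l k + min ((j:ℝ)/2^m) 1 * (b k - l k) with hpt
  have hlpos : ∀ k, 0 < l k := fun k => by positivity
  have hbx : ∀ k, b k ≤ x₁ := fun k => min_le_right _ _
  have hbpos : ∀ k, 0 < b k := fun k => lt_min (by positivity) hx₁
  have hexN : ∃ n : ℕ, x₁ < 2^n * x₀ := by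
    obtain ⟨n, hn⟩ := pow_unbounded_of_one_lt (x₁ / x₀) (by norm_num : (1:ℝ) < 2)
    exact ⟨n, by rw [div_lt_iff₀ hx₀] at hn; linarith⟩
  set N := Nat.find hexN with hN
  have hNspec : x₁ < 2^N * x₀ := Nat.find_spec hexN
  have hlb : ∀ k < N, l k ≤ b k := by
    intro k hk
    have h1 : ¬ x₁ < 2^k * x₀ := Nat.find_min hexN hk
    push_neg at h1
    refine le_min ?_ h1
    have h2 : (2:ℝ)^k ≤ 2^(k+1) := by
      apply pow_le_pow_right₀ (by norm_num) (Nat.le_succ k)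
    simp only [hl]
    nlinarith
  have hptmem : ∀ k, k < N → ∀ m j, pt k m j ∈ Set.Icc (l k) (b k) := by
    intro k hk m j
    have h0 : 0 ≤ min ((j:ℝ)/2^m) 1 := le_min (by positivity) zero_le_one
    have h1 : min ((j:ℝ)/2^m) 1 ≤ 1 := min_le_right _ _
    have hw : 0 ≤ b k - l k := sub_nonneg.2 (hlb k hk)
    constructor
    · simp only [hpt]; nlinarith
    · simp only [hpt]; nlinarith
  have hptpos : ∀ k, k < N → ∀ m j, 0 < pt k m j := fun k hk m j =>
    lt_of_lt_of_le (hlpos k) (hptmem k hk m j).1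
  have hptL2 : ∀ k, k < N → ∀ m j, MemLp (M (pt k m j)) 2 μ := fun k hk m j =>
    hL2 _ ⟨(hptpos k hk m j).le, le_trans (hptmem k hk m j).2 (hbx k)⟩
  have hptmono : ∀ k, k < N → ∀ m, Monotone (pt k m) := by
    intro k hk m i j hij
    have hw : 0 ≤ b k - l k := sub_nonneg.2 (hlb k hk)
    have : min ((i:ℝ)/2^m) 1 ≤ min ((j:ℝ)/2^m) 1 := by
      apply min_le_min _ le_rfl
      gcongr

    simp only [hpt]
    nlinarith
  have hpttop : ∀ k m, pt k m (2^m) = b k := by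
    intro k m
    have h2 : ((2^m : ℕ):ℝ)/2^m = 1 := by
      push_cast
      exact div_self (by positivity)
    simp only [hpt, h2, min_self]
    ring
  have hptnest : ∀ k m j, pt k m j = pt k (m+1) (2*j) := by
    intro k m j
    have : ((2*j : ℕ):ℝ)/2^(m+1) = (j:ℝ)/2^m := by
      push_cast
      rw [pow_succ]
      field_simp
    simp only [hpt, this]
  -- the block functions
  set C : ℕ → ℕ → Ω → ℝ := fun k m ω =>
    max ((Finset.range (2^m+1)).sup' Finset.nonempty_range_add_one
      (fun j => M (pt k m j) ω - a * (pt k m j)^2)) 0 with hC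
  set S : ℕ → Ω → ℝ≥0∞ := fun k ω => ⨆ m, ENNReal.ofReal (C k m ω) with hS
  have hCmeas : ∀ k m, Measurable (fun ω => ENNReal.ofReal (C k m ω)) := by
    intro k m
    apply ENNReal.measurable_ofReal.comp
    apply Measurable.max _ measurable_const
    exact Finset.measurable_range_sup'' fun i _ =>
      ((hmart.stronglyAdapted (pt k m i)).measurable.le (ℱ.le _)).sub measurable_const
  have hCmono : ∀ k, k < N → ∀ ω, Monotone (fun m => C k m ω) := by
    intro k hk ω
    apply monotone_nat_of_le_succ
    intro m
    apply max_le_max _ le_rfl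
    apply Finset.sup'_le
    intro j hj
    have hj' : j ≤ 2^m := Nat.lt_succ_iff.1 (Finset.mem_range.1 hj)
    have h2j : 2*j ∈ Finset.range (2^(m+1)+1) := by
      refine Finset.mem_range.2 (Nat.lt_succ_of_le ?_)
      rw [pow_succ]
      omega
    rw [hptnest k m j]
    exact Finset.le_sup' (fun i => M (pt k (m+1) i) ω - a * (pt k (m+1) i)^2) h2j
  -- step A : pointwise bound
  have stepA : ∀ ω, ENNReal.ofReal (⨆ x ∈ Set.Icc x₀ x₁, max (M x ω - a * x ^ 2) 0)
      ≤ ∑ k ∈ Finset.range N, S k ω := by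
    intro ω
    set T := ∑ k ∈ Finset.range N, S k ω with hT
    by_cases hTtop : T = ⊤
    · rw [hTtop]; exact le_top
    rw [ENNReal.ofReal_le_iff_le_toReal hTtop]
    have key : ∀ x ∈ Set.Icc x₀ x₁, ENNReal.ofReal (M x ω - a * x ^ 2) ≤ T := by
      intro x hx
      -- choose the block
      have hex2 : ∃ n : ℕ, x < 2^n * x₀ := ⟨N, lt_of_le_of_lt hx.2 hNspec⟩
      set k' := Nat.find hex2 with hk'
      have hk'spec : x < 2^k' * x₀ := Nat.find_spec hex2
      have hk'pos : k' ≠ 0 := by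
        intro h0
        rw [h0] at hk'spec
        simp only [pow_zero, one_mul] at hk'spec
        linarith [hx.1]
      obtain ⟨k, hkk⟩ : ∃ k, k' = k + 1 := ⟨k' - 1, (Nat.succ_pred_eq_of_pos (Nat.pos_of_ne_zero hk'pos)).symm⟩
      have hklow : l k ≤ x := by
        have := Nat.find_min hex2 (show k < k' by omega)
        push_neg at this
        exact this
      have hkupp : x < 2^(k+1) * x₀ := by rw [← hkk]; exact hk'spec
      have hkN : k < N := by
        have : k' ≤ N := Nat.find_le (lt_of_le_of_lt hx.2 hNspec)
        omega
      have hxb : x ≤ b k := le_min hkupp.le hx.2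
      have key2 : ENNReal.ofReal (M x ω - a * x ^ 2) ≤ S k ω := by
        rcases eq_or_lt_of_le hxb with hxeq | hxlt
        · -- x = b k, use grid point m = 0, j = 1
          have hxpt : x = pt k 0 1 := by
            simp only [hpt]
            norm_num
            linarith [hxeq]
          refine le_trans ?_ (le_iSup (fun m => ENNReal.ofReal (C k m ω)) 0)
          apply ENNReal.ofReal_le_ofReal
          refine le_trans ?_ (le_max_left _ _)
          rw [hxpt]
          exact Finset.le_sup' (fun i => M (pt k 0 i) ω - a * (pt k 0 i)^2)
            (Finset.mem_range.2 (by norm_num))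
        · -- x < b k, approximate from the right
          set w := b k - l k with hwdef
          have hw : 0 < w := by simp only [hwdef]; linarith
          set j : ℕ → ℕ := fun n => ⌊(x - l k) * 2^n / w⌋₊ + 1 with hj
          set q : ℕ → ℝ := fun n => pt k n (j n) with hq
          have harg : ∀ n : ℕ, 0 ≤ (x - l k) * 2^n / w := by
            intro n
            have : (0:ℝ) ≤ x - l k := by linarith
            positivity
          have hjle : ∀ n, j n ≤ 2^n := by
            intro n
            have hlt : (x - l k) * 2^n / w < (2^n : ℕ) := by
              push_cast
              rw [div_lt_iff₀ hw]
              have h1 : x - l k < w := by simp only [hwdef]; linarith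
              nlinarith [pow_pos (two_pos (α := ℝ)) n]
            have := (Nat.floor_lt (harg n)).2 hlt
            simp only [hj]
            omega
          have hqform : ∀ n, q n = l k + ((j n : ℝ)/2^n) * w := by
            intro n
            simp only [hq, hpt, hwdef]
            congr 2
            apply min_eq_left
            rw [div_le_one (by positivity)]
            exact_mod_cast hjle n
          have hxq : ∀ n, x < q n := by
            intro n
            have h1 : (x - l k) * 2^n / w < (j n : ℝ) := by
              simp only [hj]
              push_cast
              exact Nat.lt_floor_add_one _
            rw [hqform n]
            rw [div_lt_iff₀ hw] at h1
            have h2 : x - l k < (j n : ℝ) / 2^n * w := by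
              rw [div_mul_eq_mul_div, lt_div_iff₀ (by positivity : (0:ℝ) < 2^n)]
              nlinarith
            linarith
          have hqx : ∀ n, q n ≤ x + w * (1/2)^n := by
            intro n
            have h1 : (j n : ℝ) ≤ (x - l k) * 2^n / w + 1 := by
              simp only [hj]
              push_cast
              have := Nat.floor_le (harg n)
              linarith
            rw [hqform n]
            have h2 : (j n : ℝ) / 2^n * w ≤ ((x - l k) * 2^n / w + 1) / 2^n * w := by
              gcongr
            have h3 : ((x - l k) * 2^n / w + 1) / 2^n * w = (x - l k) + w * (1/2)^n := by
              field_simp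
              have e : (2:ℝ)^n * (1/2)^n = 1 := by rw [← mul_pow]; norm_num
              linear_combination (-w) * e
            linarith
          have hupper : Tendsto (fun n : ℕ => x + w * (1/2)^n) atTop (𝓝 x) := by
            have h0 : Tendsto (fun n : ℕ => ((1:ℝ)/2)^n) atTop (𝓝 0) :=
              tendsto_pow_atTop_nhds_zero_of_lt_one (by norm_num) (by norm_num)
            have := (h0.const_mul w).const_add x
            simpa using this
          have htq : Tendsto q atTop (𝓝 x) :=
            tendsto_of_tendsto_of_tendsto_of_le_of_le tendsto_const_nhds hupper
              (fun n => (hxq n).le) hqx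
          have hqwithin : Tendsto q atTop (𝓝[Set.Ici x] x) :=
            tendsto_nhdsWithin_iff.2 ⟨htq, Filter.Eventually.of_forall fun n => (hxq n).le⟩
          have hMq : Tendsto (fun n => M (q n) ω) atTop (𝓝 (M x ω)) :=
            Filter.Tendsto.comp (hrc ω x) hqwithin
          have hfull : Tendsto (fun n => ENNReal.ofReal (M (q n) ω - a * (q n)^2)) atTop
              (𝓝 (ENNReal.ofReal (M x ω - a * x^2))) := by
            apply (ENNReal.continuous_ofReal.tendsto _).comp
            exact hMq.sub ((htq.pow 2).const_mul a)
          refine le_of_tendsto hfull (Filter.Eventually.of_forall fun n => ?_)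
          refine le_trans ?_ (le_iSup (fun m => ENNReal.ofReal (C k m ω)) n)
          apply ENNReal.ofReal_le_ofReal
          refine le_trans ?_ (le_max_left _ _)
          exact Finset.le_sup' (fun i => M (pt k n i) ω - a * (pt k n i)^2)
            (Finset.mem_range.2 (Nat.lt_succ_of_le (hjle n)))
      refine le_trans key2 ?_
      exact Finset.single_le_sum (f := fun k => S k ω) (fun i _ => zero_le)
        (Finset.mem_range.2 hkN)
    refine Real.iSup_le (fun x => Real.iSup_le (fun hx => ?_) ENNReal.toReal_nonneg)
      ENNReal.toReal_nonneg
    refine max_le ?_ ENNReal.toReal_nonneg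
    rcases le_or_gt (M x ω - a * x ^ 2) 0 with hneg | hpos
    · exact le_trans hneg ENNReal.toReal_nonneg
    · have h1 := key x hx
      have h2 : M x ω - a * x ^ 2 = (ENNReal.ofReal (M x ω - a * x ^ 2)).toReal :=
        (ENNReal.toReal_ofReal hpos.le).symm
      rw [h2]
      exact ENNReal.toReal_mono hTtop h1
  -- step D : lintegral of S k
  have stepD : ∀ k, k < N → ∫⁻ ω, S k ω ∂μ ≤ ENNReal.ofReal (K * b k / (a * (l k)^2)) := by
    intro k hk
    have hSlim : ∫⁻ ω, S k ω ∂μ = ⨆ m, ∫⁻ ω, ENNReal.ofReal (C k m ω) ∂μ :=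
      lintegral_iSup (fun m => hCmeas k m)
        (fun m m' hmm' ω => ENNReal.ofReal_le_ofReal (hCmono k hk ω hmm'))
    rw [hSlim]
    apply iSup_le
    intro m
    -- integral of M (b k) squared
    have hmem : b k ∈ Set.Icc (0:ℝ) x₁ := ⟨(hbpos k).le, hbx k⟩
    have hEbk : ∫ ω, M (b k) ω ∂μ = 0 := by
      have h := hmart.condExp_ae_eq (show (0:ℝ) ≤ b k from (hbpos k).le)
      calc ∫ ω, M (b k) ω ∂μ = ∫ ω, (μ[M (b k)|ℱ 0]) ω ∂μ :=
            (integral_condExp (ℱ.le 0)).symm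
        _ = ∫ ω, M 0 ω ∂μ := integral_congr_ae h
        _ = 0 := by simp [hM0]
    have hvarbk : ∫ ω, (M (b k) ω)^2 ∂μ ≤ K * b k := by
      have hv := variance_eq_sub (hL2 (b k) hmem)
      have : ∫ ω, (M (b k) ω)^2 ∂μ = variance (M (b k)) μ + (∫ ω, M (b k) ω ∂μ)^2 := by
        rw [hv]; simp only [Pi.pow_apply]; ring
      rw [this, hEbk]
      simpa using hvar (b k) hmem
    have hvar' : ∫ ω, (M (pt k m (2^m)) ω)^2 ∂μ ≤ K * b k := by
      rw [hpttop k m]; exact hvarbk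
    have hφ : ∀ i ≤ 2^m, a * (l k)^2 ≤ a * (pt k m i)^2 := by
      intro i _
      have h1 := (hptmem k hk m i).1
      have h2 := (hlpos k).le
      have h3 : (l k)^2 ≤ (pt k m i)^2 := pow_le_pow_left₀ h2 h1 2
      exact mul_le_mul_of_nonneg_left h3 ha.le
    have := aux_block μ ℱ M hmart (pt k m) (hptmono k hk m) (hptL2 k hk m) (2^m)
      (a * (l k)^2) (K * b k) (by positivity) (by positivity) hvar'
      (fun i => a * (pt k m i)^2) hφ
    exact le_trans (le_of_eq rfl) this
  -- step E and assembly
  calc ∫⁻ ω, ENNReal.ofReal (⨆ x ∈ Set.Icc x₀ x₁, max (M x ω - a * x ^ 2) 0) ∂μ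
      ≤ ∫⁻ ω, ∑ k ∈ Finset.range N, S k ω ∂μ := lintegral_mono stepA
    _ = ∑ k ∈ Finset.range N, ∫⁻ ω, S k ω ∂μ :=
        lintegral_finset_sum' _ (fun k _ => (Measurable.iSup (fun m => hCmeas k m)).aemeasurable)
    _ ≤ ∑ k ∈ Finset.range N, ENNReal.ofReal (K * b k / (a * (l k)^2)) :=
        Finset.sum_le_sum (fun k hkmem => stepD k (Finset.mem_range.1 hkmem))
    _ ≤ ENNReal.ofReal (4 * K / (a * x₀)) := by
        rw [← ENNReal.ofReal_sum_of_nonneg (fun k _ => by positivity)]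
        apply ENNReal.ofReal_le_ofReal
        have hterm : ∀ k ∈ Finset.range N, K * b k / (a * (l k)^2)
            ≤ (2 * K / (a * x₀)) * (1/2)^k := by
          intro k _
          have hble : b k ≤ 2^(k+1) * x₀ := min_le_left _ _
          have h1 : K * b k ≤ K * (2^(k+1) * x₀) := by nlinarith
          have hlkpos := hlpos k
          have h2 : K * b k / (a * (l k)^2) ≤ K * (2^(k+1) * x₀) / (a * (l k)^2) := by
            have hd : (0:ℝ) < a * (l k)^2 := by positivity
            gcongr
          have h3 : K * (2^(k+1) * x₀) / (a * (l k)^2) = (2 * K / (a * x₀)) * (1/2)^k := by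
            simp only [hl]
            field_simp
            have e : (2:ℝ)^k * (1/2)^k = 1 := by rw [← mul_pow]; norm_num
            linear_combination (-(2 * K * 2^k)) * e
          linarith
        calc ∑ k ∈ Finset.range N, K * b k / (a * (l k)^2)
            ≤ ∑ k ∈ Finset.range N, (2 * K / (a * x₀)) * (1/2)^k := Finset.sum_le_sum hterm
          _ = (2 * K / (a * x₀)) * ∑ k ∈ Finset.range N, (1/2:ℝ)^k := by rw [Finset.mul_sum]
          _ ≤ (2 * K / (a * x₀)) * 2 := by
              apply mul_le_mul_of_nonneg_left (sum_geometric_two_le N) (by positivity)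
          _ = 4 * K / (a * x₀) := by ring
end
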